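/- Let (f(n)) be a sequence of reals such that Δf(n) = f(n+1) − f(n) is monotone, Δf(n) → 0, and n·|Δf(n)| → ∞ as n → ∞. Then (f(n)) is uniformly distributed modulo 1. -/

import Mathlib

open Filter

/-- `(x n)` is uniformly distributed mod 1. -/
def UDMod1 (x : ℕ → ℝ) : Prop :=
  ∀ a b : ℝ, 0 ≤ a → a < b → b ≤ 1 →
    Tendsto (fun N : ℕ =>
        (((Finset.range N).filter (fun n => Int.fract (x n) ∈ Set.Ico a b)).card : ℝ) / N)
      atTop (nhds (b - a))

/-!
After replacing `f` by `b - f` when `Δf` increases, `Δf` decreases to `0`, so `f` increases with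
ever smaller steps. Cut the indices into laps on which `⌊f⌋` is constant. On a lap entered with a
step `D` and left with a step `d ≤ D`, both `L ·` (lap length) and the number of hits of an
interval of length `L` lie between `L / D - 1` and `L / d + 1`, so the lap contributes at most
`L (1/d - 1/D) + 2` to the discrepancy. These bounds telescope: up to `N` the discrepancy is
`O(1 / Δf(N) + f(N))`, which is `o(N)` because `N Δf(N) → ∞` and, by Cesàro, `f(N) / N → 0`.
-/

open Finset Topology
open scoped fwdDiff

/-- Modulo `1`, `s` lies between `(0, L)` and `[0, L]`; leaving the endpoints free lets both
`[0, L)` and `(0, L]` qualify, the latter being needed for decreasing sequences. -/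
structure IsIntervalModOne (s : Set ℝ) (L : ℝ) : Prop where
  nonneg : 0 ≤ L
  le_one : L ≤ 1
  fract_le : ∀ x ∈ s, Int.fract x ≤ L
  mem_of_fract_mem_Ioo : ∀ x, Int.fract x ∈ Set.Ioo 0 L → x ∈ s

namespace IsIntervalModOne

variable {s : Set ℝ} {L a b : ℝ}

theorem univ : IsIntervalModOne Set.univ 1 :=
  ⟨zero_le_one, le_rfl, fun x _ => (Int.fract_lt_one x).le, fun _ _ => trivial⟩

theorem mem_Icc (hs : IsIntervalModOne s L) {x : ℝ} {k : ℤ} (hk : ⌊x⌋ = k) (hx : x ∈ s) :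
    x ∈ Set.Icc (k : ℝ) (k + L) := by
  have hfract : Int.fract x = x - k := by rw [← hk, Int.fract]
  have := hs.fract_le x hx
  exact ⟨by linarith [Int.fract_nonneg x], by linarith⟩

theorem mem_of_mem_Ioo (hs : IsIntervalModOne s L) {x : ℝ} {k : ℤ}
    (hx : x ∈ Set.Ioo (k : ℝ) (k + L)) : x ∈ s := by
  have hfract : Int.fract x = x - k :=
    Int.fract_eq_iff.2 ⟨by linarith [hx.1], by linarith [hx.2, hs.le_one], k, by ring⟩
  exact hs.mem_of_fract_mem_Ioo x ⟨by linarith [hx.1], by linarith [hx.2]⟩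

theorem setOf_fract_add_mem_Ico (ha : 0 ≤ a) (hab : a < b) (hb : b ≤ 1) :
    IsIntervalModOne {x | Int.fract (x + a) ∈ Set.Ico a b} (b - a) where
  nonneg := by linarith
  le_one := by linarith
  fract_le x hx := by
    have : Int.fract x = Int.fract (x + a) - a :=
      Int.fract_eq_iff.2 ⟨by linarith [hx.1], by linarith [hx.2, Int.fract_lt_one (x + a)],
        ⌊x + a⌋, by rw [← Int.self_sub_fract]; ring⟩
    linarith [hx.2]
  mem_of_fract_mem_Ioo x hx := by
    have : Int.fract (x + a) = Int.fract x + a :=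
      Int.fract_eq_iff.2 ⟨by linarith [hx.1], by linarith [hx.2], ⌊x⌋,
        by rw [← Int.self_sub_fract]; ring⟩
    exact ⟨by linarith [hx.1], by linarith [hx.2]⟩

theorem setOf_fract_sub_mem_Ico (ha : 0 ≤ a) (hab : a < b) (hb : b ≤ 1) :
    IsIntervalModOne {x | Int.fract (b - x) ∈ Set.Ico a b} (b - a) where
  nonneg := by linarith
  le_one := by linarith
  fract_le x hx := by
    by_cases hlt : b - Int.fract (b - x) < 1
    · have : Int.fract x = b - Int.fract (b - x) :=
        Int.fract_eq_iff.2 ⟨by linarith [hx.2], hlt, -⌊b - x⌋,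
          by rw [Int.cast_neg, ← Int.self_sub_fract]; ring⟩
      linarith [hx.1]
    · linarith [hx.1, Int.fract_lt_one x]
  mem_of_fract_mem_Ioo x hx := by
    have : Int.fract (b - x) = b - Int.fract x :=
      Int.fract_eq_iff.2 ⟨by linarith [hx.2], by linarith [hx.1], -⌊x⌋,
        by rw [Int.cast_neg, ← Int.self_sub_fract]; ring⟩
    show Int.fract (b - x) ∈ Set.Ico a b
    rw [this]
    exact ⟨by linarith [hx.2], by linarith [hx.1]⟩

end IsIntervalModOne

section Counting

variable {f : ℕ → ℝ} {i j : ℕ}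

theorem sub_le_mul_of_fwdDiff_le {D : ℝ} (hij : i ≤ j) (h : ∀ n ∈ Ico i j, Δ_[1] f n ≤ D) :
    f j - f i ≤ (j - i) * D := by
  induction j, hij using Nat.le_induction with
  | base => simp
  | succ j hij ih =>
    have hj := h j (by simp [hij])
    have := ih fun n hn => h n (Ico_subset_Ico_right j.le_succ hn)
    simp only [fwdDiff, Nat.cast_succ] at *
    linarith

theorem mul_le_sub_of_le_fwdDiff {d : ℝ} (hij : i ≤ j) (h : ∀ n ∈ Ico i j, d ≤ Δ_[1] f n) :
    (j - i) * d ≤ f j - f i := by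
  have := sub_le_mul_of_fwdDiff_le (f := -f) (D := -d) hij fun n hn => by
    have := h n hn
    simp only [fwdDiff, Pi.neg_apply] at *
    linarith
  simp only [Pi.neg_apply] at this
  linarith

theorem card_le_div_add_one {S : Finset ℕ} {c d L : ℝ} (hS : S ⊆ Ico i j) (hd : 0 < d)
    (hL : 0 ≤ L) (hstep : ∀ n ∈ Ico i j, d ≤ Δ_[1] f n)
    (hval : ∀ n ∈ S, f n ∈ Set.Icc c (c + L)) :
    (#S : ℝ) ≤ L / d + 1 := by
  rcases S.eq_empty_or_nonempty with rfl | hne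
  · simp only [card_empty, Nat.cast_zero]
    positivity
  set p := S.min' hne
  set q := S.max' hne
  have hpq : p ≤ q := S.min'_le _ (S.max'_mem hne)
  have hcard : #S ≤ q + 1 - p := by
    simpa using card_le_card fun n hn => mem_Icc.2 ⟨S.min'_le n hn, S.le_max' n hn⟩
  have hspan : (q - p : ℝ) * d ≤ f q - f p :=
    mul_le_sub_of_le_fwdDiff hpq fun n hn => hstep n (by
      have := hS (S.min'_mem hne); have := hS (S.max'_mem hne)
      simp only [mem_Ico] at *; omega)
  have hcard' : (#S : ℝ) ≤ q - p + 1 := by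
    have : (#S : ℝ) ≤ ((q + 1 - p : ℕ) : ℝ) := by exact_mod_cast hcard
    rw [Nat.cast_sub (by omega)] at this
    push_cast at this
    linarith
  have hq := hval q (S.max'_mem hne)
  have hp := hval p (S.min'_mem hne)
  rw [← sub_le_iff_le_add, le_div_iff₀ hd]
  nlinarith [hq.2, hp.1]

theorem exists_mem_Ioc_of_fwdDiff_le {c D : ℝ} (hf : Monotone f)
    (hstep : ∀ n, i ≤ n → Δ_[1] f n ≤ D) (hi : f i ≤ c + D) (hj : c < f j) :
    ∃ n, i ≤ n ∧ f n ∈ Set.Ioc c (c + D) := by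
  classical
  have hex : ∃ n, i ≤ n ∧ c < f n :=
    ⟨max i j, le_max_left i j, hj.trans_le (hf (le_max_right i j))⟩
  obtain ⟨hin, hcn⟩ := Nat.find_spec hex
  refine ⟨Nat.find hex, hin, hcn, ?_⟩
  rcases hin.eq_or_lt with h | h
  · rwa [← h]
  · obtain ⟨m, hm⟩ : ∃ m, Nat.find hex = m + 1 := Nat.exists_eq_add_one_of_ne_zero (by omega)
    have hfm : f m ≤ c := by
      have := Nat.find_min hex (show m < Nat.find hex by omega)
      push Not at this
      exact this (by omega)
    have := hstep m (by omega)
    rw [hm]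
    simp only [fwdDiff] at this
    linarith

theorem div_le_card_filter_add_one {c D L : ℝ} (hf : Monotone f) (hD : 0 < D)
    (hstep : ∀ n, i ≤ n → Δ_[1] f n ≤ D) (hi : f i ≤ c + D) (hj : c + L ≤ f j) :
    L / D ≤ #{n ∈ Ico i j | f n ∈ Set.Ioo c (c + L)} + 1 := by
  rcases le_or_gt L 0 with hL | hL
  · have : L / D ≤ 0 := div_nonpos_of_nonpos_of_nonneg hL hD.le
    linarith [Nat.cast_nonneg (α := ℝ) #{n ∈ Ico i j | f n ∈ Set.Ioo c (c + L)}]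
  obtain ⟨n₀, hin₀, hcn₀, hn₀⟩ := exists_mem_Ioc_of_fwdDiff_le hf hstep hi (by linarith : c < f j)
  set m := ⌈L / D⌉₊ - 1
  have hsub : Ico n₀ (n₀ + m) ⊆ {n ∈ Ico i j | f n ∈ Set.Ioo c (c + L)} := by
    intro n hn
    rw [mem_Ico] at hn
    have hgrowth := sub_le_mul_of_fwdDiff_le hn.1 fun k hk => hstep k (by simp at hk; omega)
    have hsteps : ((n - n₀ : ℕ) + 1 : ℝ) < L / D := by
      exact_mod_cast Nat.lt_ceil.1 (show n - n₀ + 1 < ⌈L / D⌉₊ by omega)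
    rw [lt_div_iff₀ hD, Nat.cast_sub hn.1] at hsteps
    have hlt : f n < c + L := by nlinarith
    simp only [mem_filter, mem_Ico, Set.mem_Ioo]
    refine ⟨⟨by omega, ?_⟩, by linarith [hf hn.1], hlt⟩
    by_contra! h
    linarith [hf h]
  have hceil : L / D ≤ m + 1 :=
    (Nat.le_ceil _).trans (by exact_mod_cast (show ⌈L / D⌉₊ ≤ m + 1 by omega))
  have hcard := card_le_card hsub
  rw [Nat.card_Ico, Nat.add_sub_cancel_left] at hcard
  calc L / D ≤ m + 1 := hceil
    _ ≤ _ := by gcongr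

end Counting

open scoped Classical in
noncomputable def hitCount (s : Set ℝ) (f : ℕ → ℝ) (i j : ℕ) : ℕ :=
  #{n ∈ Ico i j | f n ∈ s}

noncomputable def discrepancy (s : Set ℝ) (L : ℝ) (f : ℕ → ℝ) (i j : ℕ) : ℝ :=
  hitCount s f i j - L * ((j : ℝ) - i)

section Discrepancy

variable {f : ℕ → ℝ} {s : Set ℝ} {L : ℝ} {i j k : ℕ}

theorem hitCount_add (hij : i ≤ j) (hjk : j ≤ k) :
    hitCount s f i k = hitCount s f i j + hitCount s f j k := by
  classical
  simp only [hitCount]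
  rw [← Ico_union_Ico_eq_Ico hij hjk, filter_union,
    card_union_of_disjoint (disjoint_filter_filter (Ico_disjoint_Ico_consecutive i j k))]

theorem hitCount_univ : hitCount Set.univ f i j = j - i := by
  simp [hitCount]

theorem discrepancy_add (hij : i ≤ j) (hjk : j ≤ k) :
    discrepancy s L f i k = discrepancy s L f i j + discrepancy s L f j k := by
  simp only [discrepancy, hitCount_add hij hjk, Nat.cast_add]
  ring

end Discrepancy

section Lap

variable {f : ℕ → ℝ} {s : Set ℝ} {L d D : ℝ} {i j : ℕ} {k : ℤ}

theorem hitCount_le_div_add_one (hs : IsIntervalModOne s L) (hlap : ∀ n ∈ Ico i j, ⌊f n⌋ = k)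
    (hd : 0 < d) (hstep : ∀ n ∈ Ico i j, d ≤ Δ_[1] f n) :
    (hitCount s f i j : ℝ) ≤ L / d + 1 := by
  classical
  refine card_le_div_add_one (c := k) (filter_subset _ _) hd hs.nonneg hstep fun n hn => ?_
  rw [mem_filter] at hn
  exact hs.mem_Icc (hlap n hn.1) hn.2

theorem div_le_hitCount_add_one (hs : IsIntervalModOne s L) (hf : Monotone f) (hD : 0 < D)
    (hstep : ∀ n, i ≤ n → Δ_[1] f n ≤ D) (hi : f i ≤ k + D) (hj : k + 1 ≤ f j) :
    L / D ≤ hitCount s f i j + 1 := by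
  classical
  refine (div_le_card_filter_add_one hf hD hstep hi (by linarith [hs.le_one])).trans ?_
  gcongr
  refine card_le_card fun n hn => ?_
  rw [mem_filter] at hn ⊢
  exact ⟨hn.1, hs.mem_of_mem_Ioo hn.2⟩

theorem mul_length_le_div_add_one (hs : IsIntervalModOne s L)
    (hlap : ∀ n ∈ Ico i j, ⌊f n⌋ = k) (hij : i ≤ j) (hd : 0 < d)
    (hstep : ∀ n ∈ Ico i j, d ≤ Δ_[1] f n) :
    L * ((j : ℝ) - i) ≤ L / d + 1 := by
  have hlen := hitCount_le_div_add_one .univ hlap hd hstep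
  rw [hitCount_univ, Nat.cast_sub hij] at hlen
  calc L * ((j : ℝ) - i) ≤ L * (1 / d + 1) := by gcongr; exact hs.nonneg
    _ ≤ L / d + 1 := by linarith [hs.le_one, mul_one_div L d]

theorem div_le_mul_length_add_one (hs : IsIntervalModOne s L) (hf : Monotone f) (hij : i ≤ j)
    (hD : 0 < D) (hstep : ∀ n, i ≤ n → Δ_[1] f n ≤ D) (hi : f i ≤ k + D) (hj : k + 1 ≤ f j) :
    L / D ≤ L * ((j : ℝ) - i) + 1 := by
  have hlen := div_le_hitCount_add_one .univ hf hD hstep hi hj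
  rw [hitCount_univ, Nat.cast_sub hij] at hlen
  calc L / D = L * (1 / D) := (mul_one_div L D).symm
    _ ≤ L * ((j : ℝ) - i + 1) := by gcongr; exact hs.nonneg
    _ ≤ L * ((j : ℝ) - i) + 1 := by linarith [hs.le_one]

theorem abs_discrepancy_le_of_lap (hs : IsIntervalModOne s L) (hlap : ∀ n ∈ Ico i j, ⌊f n⌋ = k)
    (hij : i ≤ j) (hd : 0 < d) (hstep : ∀ n ∈ Ico i j, d ≤ Δ_[1] f n) :
    |discrepancy s L f i j| ≤ L / d + 1 := by
  have hhit := hitCount_le_div_add_one hs hlap hd hstep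
  have hlen := mul_length_le_div_add_one hs hlap hij hd hstep
  have hlen_nonneg : 0 ≤ L * ((j : ℝ) - i) :=
    mul_nonneg hs.nonneg (sub_nonneg.2 (by exact_mod_cast hij))
  rw [discrepancy, abs_sub_le_iff]
  constructor <;> linarith [Nat.cast_nonneg (α := ℝ) (hitCount s f i j)]

theorem abs_discrepancy_le_of_full_lap (hs : IsIntervalModOne s L)
    (hlap : ∀ n ∈ Ico i j, ⌊f n⌋ = k) (hf : Monotone f) (hij : i ≤ j) (hd : 0 < d) (hD : 0 < D)
    (hstep_ge : ∀ n ∈ Ico i j, d ≤ Δ_[1] f n) (hstep_le : ∀ n, i ≤ n → Δ_[1] f n ≤ D)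
    (hi : f i ≤ k + D) (hj : k + 1 ≤ f j) :
    |discrepancy s L f i j| ≤ L / d - L / D + 2 := by
  have hhit := hitCount_le_div_add_one hs hlap hd hstep_ge
  have hhit' := div_le_hitCount_add_one hs hf hD hstep_le hi hj
  have hlen := mul_length_le_div_add_one hs hlap hij hd hstep_ge
  have hlen' := div_le_mul_length_add_one hs hf hij hD hstep_le hi hj
  rw [discrepancy, abs_sub_le_iff]
  constructor <;> linarith

end Lap

section Telescoping

variable {f : ℕ → ℝ} {s : Set ℝ} {L : ℝ} {M j : ℕ}

theorem exists_lap_start (hf : Monotone f) (hMj : M ≤ j) :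
    ∃ i, M ≤ i ∧ i ≤ j ∧ (∀ n ∈ Ico i (j + 1), ⌊f n⌋ = ⌊f j⌋) ∧
      (i = M ∨ ∃ i', M ≤ i' ∧ i = i' + 1 ∧ ⌊f i'⌋ < ⌊f i⌋) := by
  induction j, hMj using Nat.le_induction with
  | base =>
    refine ⟨M, le_rfl, le_rfl, fun n hn => ?_, Or.inl rfl⟩
    rw [show n = M by simp at hn; omega]
  | succ j hMj ih =>
    rcases (Int.floor_mono (hf j.le_succ)).lt_or_eq with hlt | heq
    · refine ⟨j + 1, by omega, le_rfl, fun n hn => ?_, Or.inr ⟨j, hMj, rfl, hlt⟩⟩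
      rw [show n = j + 1 by simp at hn; omega]
    · obtain ⟨i, hMi, hij, hlap, hstart⟩ := ih
      refine ⟨i, hMi, by omega, fun n hn => ?_, hstart⟩
      rw [mem_Ico] at hn
      rcases (Nat.lt_succ_iff.1 hn.2).lt_or_eq with hn' | rfl
      · rw [hlap n (mem_Ico.2 ⟨hn.1, hn'⟩), heq]
      · rfl

theorem abs_discrepancy_le_of_floor_lt (hs : IsIntervalModOne s L) (hf : Monotone f)
    (hΔ : Antitone (Δ_[1] f)) (hpos : ∀ n, M ≤ n → 0 < Δ_[1] f n) (hsmall : Δ_[1] f M ≤ 1 / 2)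
    (hMj : M ≤ j) (hj : ⌊f j⌋ < ⌊f (j + 1)⌋) :
    |discrepancy s L f M (j + 1)| ≤ L / Δ_[1] f j + 4 * (f (j + 1) - f M) + 1 := by
  induction j using Nat.strong_induction_on with
  | _ j ih =>
  have hstep_ge : ∀ n ∈ Ico M (j + 1), Δ_[1] f j ≤ Δ_[1] f n :=
    fun n hn => hΔ (by simp at hn; omega)
  obtain ⟨i, hMi, hij, hlap, rfl | ⟨i', hMi', rfl, hi'⟩⟩ := exists_lap_start hf hMj
  · have := abs_discrepancy_le_of_lap hs hlap (by omega) (hpos j hMj) hstep_ge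
    linarith [hf (show i ≤ j + 1 by omega)]
  · have hk : (⌊f j⌋ : ℝ) + 1 ≤ f (j + 1) := by
      have := Int.floor_le (f (j + 1))
      have : (⌊f j⌋ : ℝ) + 1 ≤ ⌊f (j + 1)⌋ := by exact_mod_cast hj
      linarith
    have hfi : f (i' + 1) ≤ ⌊f j⌋ + Δ_[1] f i' := by
      have h1 : f i' < ⌊f (i' + 1)⌋ := Int.floor_lt.1 hi'
      rw [hlap (i' + 1) (by simp; omega)] at h1
      simp only [fwdDiff]
      linarith
    have hlap_est := abs_discrepancy_le_of_full_lap hs hlap hf (by omega) (hpos j hMj)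
      (hpos i' hMi') (fun n hn => hstep_ge n (by simp at hn ⊢; omega))
      (fun n hn => hΔ (by omega)) hfi hk
    have hIH := ih i' (by omega) hMi' hi'
    -- a full lap raises `f` by more than `1 - 1/2`, which pays for the `+ 2` of its estimate
    have hhalf : 1 / 2 ≤ f (j + 1) - f (i' + 1) := by linarith [hΔ hMi']
    rw [discrepancy_add (by omega) (by omega : i' + 1 ≤ j + 1)]
    linarith [abs_add_le (discrepancy s L f M (i' + 1)) (discrepancy s L f (i' + 1) (j + 1))]

theorem abs_discrepancy_le (hs : IsIntervalModOne s L) (hf : Monotone f)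
    (hΔ : Antitone (Δ_[1] f)) (hpos : ∀ n, M ≤ n → 0 < Δ_[1] f n) (hsmall : Δ_[1] f M ≤ 1 / 2)
    (hMj : M ≤ j) :
    |discrepancy s L f M (j + 1)| ≤ 2 * (L / Δ_[1] f j) + 4 * (f (j + 1) - f M) + 2 := by
  have hstep_ge : ∀ n ∈ Ico M (j + 1), Δ_[1] f j ≤ Δ_[1] f n :=
    fun n hn => hΔ (by simp at hn; omega)
  have hdiv : 0 ≤ L / Δ_[1] f j := div_nonneg hs.nonneg (hpos j hMj).le
  obtain ⟨i, hMi, hij, hlap, rfl | ⟨i', hMi', rfl, hi'⟩⟩ := exists_lap_start hf hMj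
  · have := abs_discrepancy_le_of_lap hs hlap (by omega) (hpos j hMj) hstep_ge
    linarith [hf (show i ≤ j + 1 by omega)]
  · have hlap_est := abs_discrepancy_le_of_lap hs hlap (by omega) (hpos j hMj)
      (fun n hn => hstep_ge n (by simp at hn ⊢; omega))
    have hprev := abs_discrepancy_le_of_floor_lt hs hf hΔ hpos hsmall hMi' hi'
    have hmono_div : L / Δ_[1] f i' ≤ L / Δ_[1] f j :=
      div_le_div_of_nonneg_left hs.nonneg (hpos j hMj) (hΔ (by omega))
    rw [discrepancy_add (by omega) (by omega : i' + 1 ≤ j + 1)]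
    linarith [abs_add_le (discrepancy s L f M (i' + 1)) (discrepancy s L f (i' + 1) (j + 1)),
      hf (show i' + 1 ≤ j + 1 by omega)]

theorem abs_hitCount_div_sub_le (hs : IsIntervalModOne s L) (hf : Monotone f)
    (hΔ : Antitone (Δ_[1] f)) (hpos : ∀ n, M ≤ n → 0 < Δ_[1] f n) (hsmall : Δ_[1] f M ≤ 1 / 2)
    (hMj : M ≤ j) :
    |(hitCount s f 0 (j + 1) : ℝ) / ↑(j + 1) - L| ≤
      (|discrepancy s L f 0 M| + 2 - 4 * f M + 2 * (L / Δ_[1] f j) + 4 * f (j + 1)) / (j + 1) := by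
  have hj : (0 : ℝ) < j + 1 := by positivity
  have heq : (hitCount s f 0 (j + 1) : ℝ) / ↑(j + 1) - L =
      discrepancy s L f 0 (j + 1) / (j + 1) := by
    rw [discrepancy]
    field_simp
    push_cast
    ring
  rw [heq, abs_div, abs_of_pos hj, discrepancy_add (Nat.zero_le M) (by omega : M ≤ j + 1)]
  gcongr
  linarith [abs_add_le (discrepancy s L f 0 M) (discrepancy s L f M (j + 1)),
    abs_discrepancy_le hs hf hΔ hpos hsmall hMj]

end Telescoping

section Limit

variable {f : ℕ → ℝ}

theorem tendsto_div_natCast_of_tendsto_fwdDiff (h : Tendsto (Δ_[1] f) atTop (𝓝 0)) :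
    Tendsto (fun N : ℕ => f N / N) atTop (𝓝 0) := by
  have hcesaro : Tendsto (fun N : ℕ => (N : ℝ)⁻¹ * (f N - f 0)) atTop (𝓝 0) := by
    simpa only [fwdDiff, sum_range_sub] using h.cesaro
  have hconst := tendsto_inv_atTop_nhds_zero_nat.const_mul (f 0)
  rw [mul_zero] at hconst
  simpa using (hcesaro.add hconst).congr fun N => by ring

theorem tendsto_hitCount_div {s : Set ℝ} {L : ℝ} (hs : IsIntervalModOne s L)
    (hΔ : Antitone (Δ_[1] f)) (hzero : Tendsto (Δ_[1] f) atTop (𝓝 0))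
    (hinf : Tendsto (fun n : ℕ => (n : ℝ) * |Δ_[1] f n|) atTop atTop) :
    Tendsto (fun N : ℕ => (hitCount s f 0 N : ℝ) / N) atTop (𝓝 L) := by
  have hnonneg : ∀ n, 0 ≤ Δ_[1] f n := hΔ.le_of_tendsto hzero
  have hf : Monotone f := monotone_nat_of_le_succ fun n => sub_nonneg.1 (hnonneg n)
  simp only [abs_of_nonneg (hnonneg _)] at hinf
  obtain ⟨M, hM⟩ := ((hzero.eventually (ge_mem_nhds (by norm_num : (0 : ℝ) < 1 / 2))).and
    (hinf.eventually_gt_atTop 0)).exists_forall_of_atTop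
  have hpos : ∀ n, M ≤ n → 0 < Δ_[1] f n := fun n hn =>
    pos_of_mul_pos_right (hM n hn).2 (Nat.cast_nonneg n)
  set C := |discrepancy s L f 0 M| + 2 - 4 * f M
  have hbound : ∀ j, M ≤ j → |(hitCount s f 0 (j + 1) : ℝ) / ↑(j + 1) - L| ≤
      (C + 2 * (L / Δ_[1] f j) + 4 * f (j + 1)) / (j + 1) :=
    fun j hMj => abs_hitCount_div_sub_le hs hf hΔ hpos (hM M le_rfl).1 hMj
  have hinv : Tendsto (fun j : ℕ => ((j + 1 : ℝ) * Δ_[1] f j)⁻¹) atTop (𝓝 0) := by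
    refine (tendsto_atTop_mono (fun j => ?_) hinf).inv_tendsto_atTop
    nlinarith [hnonneg j]
  have hgrowth : Tendsto (fun j : ℕ => f (j + 1) / (j + 1 : ℝ)) atTop (𝓝 0) := by
    simpa [Function.comp_def] using
      (tendsto_div_natCast_of_tendsto_fwdDiff hzero).comp (tendsto_add_atTop_nat 1)
  have hlim : Tendsto (fun j : ℕ => (C + 2 * (L / Δ_[1] f j) + 4 * f (j + 1)) / (j + 1))
      atTop (𝓝 0) := by
    have := ((tendsto_one_div_add_atTop_nhds_zero_nat.const_mul C).add
      (hinv.const_mul (2 * L))).add (hgrowth.const_mul 4)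
    simp only [mul_zero, add_zero] at this
    exact this.congr fun j => by rw [mul_inv]; ring
  refine (tendsto_add_atTop_iff_nat 1).1 (tendsto_sub_nhds_zero_iff.1 ?_)
  exact squeeze_zero_norm' (eventually_atTop.2 ⟨M, hbound⟩) hlim

end Limit

theorem udMod1_of_difference (f : ℕ → ℝ)
    (hmono : Monotone (fun n => f (n + 1) - f n) ∨ Antitone (fun n => f (n + 1) - f n))
    (hzero : Tendsto (fun n => f (n + 1) - f n) atTop (nhds 0))
    (hinf : Tendsto (fun n : ℕ => (n : ℝ) * |f (n + 1) - f n|) atTop atTop) :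
    UDMod1 f := by
  intro a b ha hab hb
  rcases hmono with hmono | hanti
  · have hΔ : Δ_[1] (fun n => b - f n) = -Δ_[1] f := by
      ext n
      simp only [fwdDiff, Pi.neg_apply]
      ring
    simpa [hitCount] using tendsto_hitCount_div (f := fun n => b - f n)
      (IsIntervalModOne.setOf_fract_sub_mem_Ico ha hab hb)
      (by rw [hΔ]; exact hmono.neg) (by rw [hΔ, ← neg_zero]; exact hzero.neg)
      (by simp only [hΔ, Pi.neg_apply, abs_neg]; exact hinf)
  · have hΔ : Δ_[1] (fun n => f n - a) = Δ_[1] f := by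
      ext n
      simp only [fwdDiff]
      ring
    simpa [hitCount] using tendsto_hitCount_div (f := fun n => f n - a)
      (IsIntervalModOne.setOf_fract_add_mem_Ico ha hab hb) (hΔ ▸ hanti) (hΔ ▸ hzero)
      (by rw [hΔ]; exact hinf)
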